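/- Put s(τ) = (Ξ − 2ξ)/(q(1 − τ)). For every τ in the open interval ((q−2)/(q−1), 1) such that s(τ) ≥ 2 (so that λ(s(τ)−2) is defined), one has Π(τ, λ(s(τ) − 2)) ≤ 10·2^(τ·ξ) + 101. -/

import Mathlib

open scoped Classical ENNReal
open Real Set Filter

/-- The quadratic function `Q(s) = q·s²`. -/
noncomputable def Qf (q : ℤ) (s : ℝ) : ℝ := (q : ℝ) * s ^ 2

/-- The half-open interval `I_s = [2^(Q(s)), 2^(Q(s)) + Q(s+1) − Q(s) + Ξ)`. -/
noncomputable def Iset (q Ξ : ℤ) (s : ℝ) : Set ℝ :=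
  Set.Ico ((2 : ℝ) ^ (Qf q s)) ((2 : ℝ) ^ (Qf q s) + Qf q (s + 1) - Qf q s + (Ξ : ℝ))

/-- The half-open interval `J_s = [2^(Q(s)) + Q(s+1) − Q(s) + Ξ, 2^(Q(s+1)))`. -/
noncomputable def Jset (q Ξ : ℤ) (s : ℝ) : Set ℝ :=
  Set.Ico ((2 : ℝ) ^ (Qf q s) + Qf q (s + 1) - Qf q s + (Ξ : ℝ)) ((2 : ℝ) ^ (Qf q (s + 1)))

/-- The sequence `(x_j)` in `{0,1}`: `x_j = 0` iff `j + 1 ∈ I_s` for some integer `s ≥ 0`. -/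
noncomputable def xseq (q Ξ : ℤ) (j : ℕ) : ℕ :=
  if ∃ s : ℕ, ((j : ℝ) + 1) ∈ Iset q Ξ (s : ℝ) then 0 else 1

/-- `N(k) = #{ j ∈ {0,…,k−1} : x_j = 0 }`, with `N(0) = 0`. -/
noncomputable def Nf (q Ξ : ℤ) (k : ℕ) : ℕ :=
  ((Finset.range k).filter (fun j => xseq q Ξ j = 0)).card

/-- `B(0) = 0`, `B(1) = 1`, and for `k ≥ 2`,
`B(k) = 1 + #{ j ∈ {0,…,k−2} : x_j ≠ x_{j+1} }`. -/
noncomputable def Bf (q Ξ : ℤ) (k : ℕ) : ℕ :=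
  if k = 0 then 0
  else 1 + ((Finset.range (k - 1)).filter (fun j => xseq q Ξ j ≠ xseq q Ξ (j + 1))).card

/-- The length `|J_s| = 2^(Q(s+1)) − 2^(Q(s)) − (Q(s+1) − Q(s) + Ξ)` of `J_s`. -/
noncomputable def Jlen (q Ξ : ℤ) (s : ℝ) : ℝ :=
  (2 : ℝ) ^ (Qf q (s + 1)) - (2 : ℝ) ^ (Qf q s) - (Qf q (s + 1) - Qf q s + (Ξ : ℝ))

/-- `λ(s) = 1/|J_s|`. -/
noncomputable def lamf (q Ξ : ℤ) (s : ℝ) : ℝ := 1 / Jlen q Ξ s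

/-- The two-variable series `Π(τ,λ) = Σ_{k≥0} 2^(−λk − τ·N(k) + τ·ξ·B(k))`, a sum in `[0,∞]`. -/
noncomputable def Pi2 (q Ξ : ℤ) (ξ τ lam : ℝ) : ℝ≥0∞ :=
  ∑' k : ℕ, ENNReal.ofReal
    ((2 : ℝ) ^ (-lam * (k : ℝ) - τ * (Nf q Ξ k : ℝ) + τ * ξ * (Bf q Ξ k : ℝ)))


/-!
The sequence `x` alternates between a run of zeros on `[2^Q(s), 2^Q(s) + L s)`, with
`L s = q(2s+1) + Ξ`, and a run of ones up to `2^Q(s+1)`, so `N` and `B` are explicit on every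
run. Writing `c = Ξ - 2ξ`, the exponent of the summand is `τξ - τ(qs² + cs) - τ(k - 2^Q(s) + 1)`
(at most) on the `s`-th zero run, and `-λk - τ(qu² + cu)` with `u = s + 1` on the `s`-th one run.
The zero runs give a double geometric series, at most `10·2^(τξ)`. A one run is bounded either
by its length `2^(qu²)` or by `(1 - 2^(-λ))⁻¹ ≤ 1 + 2/λ ≤ 3·2^(q(σ-1)²)`; since
`c = qσ(1-τ)`, the first bound decays geometrically in `min(u, σ-1-u)` for `u ≤ σ-1` and the
second in `u - (σ-1)` beyond, so the one runs contribute a bounded amount.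
-/

lemma one_add_half_mul_le_two_rpow {x : ℝ} (hx : 0 ≤ x) : 1 + x / 2 ≤ (2 : ℝ) ^ x := by
  have hlog : 1 / 2 ≤ Real.log 2 := by linarith [Real.log_two_gt_d9]
  rw [Real.rpow_def_of_pos two_pos]
  nlinarith [Real.add_one_le_exp (Real.log 2 * x)]

lemma one_sub_two_rpow_neg_inv_le {a : ℝ} (ha : 0 < a) :
    (1 - (2 : ℝ) ^ (-a))⁻¹ ≤ 1 + 2 / a := by
  have hy : a / 2 ≤ (2 : ℝ) ^ a - 1 := by linarith [one_add_half_mul_le_two_rpow ha.le]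
  have hy0 : 0 < (2 : ℝ) ^ a - 1 := by linarith
  calc (1 - (2 : ℝ) ^ (-a))⁻¹ = 1 + 1 / ((2 : ℝ) ^ a - 1) := by
        rw [Real.rpow_neg zero_le_two]
        field_simp
        ring
    _ ≤ 1 + 1 / (a / 2) := by gcongr
    _ = 1 + 2 / a := by ring

lemma ofReal_two_rpow_le_ofReal_two_rpow {a b : ℝ} (h : a ≤ b) :
    ENNReal.ofReal ((2 : ℝ) ^ a) ≤ ENNReal.ofReal ((2 : ℝ) ^ b) :=
  ENNReal.ofReal_le_ofReal (Real.rpow_le_rpow_of_exponent_le one_le_two h)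

lemma ofReal_two_rpow_le_add_of_le_or_le {a b e : ℝ} (h : e ≤ a ∨ e ≤ b) :
    ENNReal.ofReal ((2 : ℝ) ^ e) ≤ ENNReal.ofReal ((2 : ℝ) ^ a) + ENNReal.ofReal ((2 : ℝ) ^ b) := by
  rcases h with h | h
  · exact (ofReal_two_rpow_le_ofReal_two_rpow h).trans le_self_add
  · exact (ofReal_two_rpow_le_ofReal_two_rpow h).trans le_add_self

lemma ofReal_two_rpow_add (a b : ℝ) :
    ENNReal.ofReal ((2 : ℝ) ^ (a + b)) =
      ENNReal.ofReal ((2 : ℝ) ^ a) * ENNReal.ofReal ((2 : ℝ) ^ b) := by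
  rw [Real.rpow_add two_pos, ENNReal.ofReal_mul (by positivity)]

lemma tsum_ofReal_two_rpow_neg_mul_le {a : ℝ} (ha : 0 < a) :
    ∑' n : ℕ, ENNReal.ofReal ((2 : ℝ) ^ (-a * n)) ≤ ENNReal.ofReal (1 + 2 / a) := by
  have hr : (2 : ℝ) ^ (-a) < 1 := Real.rpow_lt_one_of_one_lt_of_neg one_lt_two (neg_lt_zero.2 ha)
  have hterm : ∀ n : ℕ,
      ENNReal.ofReal ((2 : ℝ) ^ (-a * n)) = ENNReal.ofReal ((2 : ℝ) ^ (-a)) ^ n := by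
    intro n
    rw [Real.rpow_mul zero_le_two, Real.rpow_natCast, ENNReal.ofReal_pow (by positivity)]
  simp_rw [hterm, ENNReal.tsum_geometric]
  rw [← ENNReal.ofReal_one, ← ENNReal.ofReal_sub _ (by positivity),
    ← ENNReal.ofReal_inv_of_pos (by linarith)]
  exact ENNReal.ofReal_le_ofReal (one_sub_two_rpow_neg_inv_le ha)

lemma tsum_ofReal_two_rpow_neg_mul_abs_sub_le {a : ℝ} (ha : 0 < a) (t : ℝ) :
    ∑' n : ℕ, ENNReal.ofReal ((2 : ℝ) ^ (-a * |(n : ℝ) - t|)) ≤ 2 * ENNReal.ofReal (1 + 2 / a) := by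
  set K := ⌈t⌉₊
  set g : ℕ → ℝ≥0∞ := fun n => ENNReal.ofReal ((2 : ℝ) ^ (-a * n))
  have hleft : ∀ n ∈ Finset.range K,
      ENNReal.ofReal ((2 : ℝ) ^ (-a * |(n : ℝ) - t|)) ≤ g (K - 1 - n) := by
    intro n hn
    have hnt : (n : ℝ) < t := Nat.lt_ceil.1 (Finset.mem_range.1 hn)
    have hKt : (K : ℝ) < t + 1 := Nat.ceil_lt_add_one (by linarith [n.cast_nonneg (α := ℝ)])
    have hn1 : n + 1 ≤ K := Finset.mem_range.1 hn
    refine ofReal_two_rpow_le_ofReal_two_rpow ?_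
    rw [abs_of_neg (by linarith), Nat.cast_sub (by omega), Nat.cast_sub (by omega)]
    push_cast
    nlinarith
  have hright : ∀ m : ℕ, ENNReal.ofReal ((2 : ℝ) ^ (-a * |((m + K : ℕ) : ℝ) - t|)) ≤ g m := by
    intro m
    have hKt : t ≤ K := Nat.le_ceil t
    refine ofReal_two_rpow_le_ofReal_two_rpow ?_
    rw [abs_of_nonneg (by push_cast; linarith)]
    push_cast
    nlinarith
  rw [← ENNReal.summable.sum_add_tsum_nat_add' (k := K), two_mul]
  gcongr
  · calc _ ≤ ∑ n ∈ Finset.range K, g (K - 1 - n) := Finset.sum_le_sum hleft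
      _ = ∑ n ∈ Finset.range K, g n := Finset.sum_range_reflect g K
      _ ≤ ∑' n, g n := ENNReal.sum_le_tsum _
      _ ≤ _ := tsum_ofReal_two_rpow_neg_mul_le ha
  · exact (ENNReal.tsum_le_tsum hright).trans (tsum_ofReal_two_rpow_neg_mul_le ha)

lemma tsum_eq_sum_range_add_tsum_sum_Ico {A : ℕ → ℕ} (hA : StrictMono A) (f : ℕ → ℝ≥0∞) :
    ∑' k, f k = ∑ k ∈ Finset.range (A 0), f k + ∑' s, ∑ k ∈ Finset.Ico (A s) (A (s + 1)), f k := by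
  have hpartial : ∀ n, ∑ k ∈ Finset.range (A n), f k =
      ∑ k ∈ Finset.range (A 0), f k +
        ∑ s ∈ Finset.range n, ∑ k ∈ Finset.Ico (A s) (A (s + 1)), f k := by
    intro n
    induction n with
    | zero => simp
    | succ n ih =>
      rw [Finset.sum_range_succ, ← add_assoc, ← ih,
        Finset.sum_range_add_sum_Ico _ (hA.monotone n.le_succ)]
  rw [ENNReal.tsum_eq_iSup_nat' hA.tendsto_atTop, ENNReal.tsum_eq_iSup_nat, ENNReal.add_iSup]
  exact iSup_congr hpartial

section Runs

variable (x : ℕ → ℕ)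

def zeroCount (k : ℕ) : ℕ := ((Finset.range k).filter (fun j => x j = 0)).card

def runCount (k : ℕ) : ℕ :=
  if k = 0 then 0 else 1 + ((Finset.range (k - 1)).filter (fun j => x j ≠ x (j + 1))).card

lemma zeroCount_succ (k : ℕ) :
    zeroCount x (k + 1) = zeroCount x k + if x k = 0 then 1 else 0 := by
  simp only [zeroCount, Finset.range_add_one, Finset.filter_insert]
  split_ifs
  · rw [Finset.card_insert_of_notMem (by simp)]
  · rfl

lemma runCount_one : runCount x 1 = 1 := by simp [runCount]

lemma runCount_succ_succ (k : ℕ) :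
    runCount x (k + 2) = runCount x (k + 1) + if x k = x (k + 1) then 0 else 1 := by
  rw [runCount, runCount, if_neg (by omega), if_neg (by omega), Nat.add_sub_cancel,
    show k + 2 - 1 = k + 1 from rfl, Finset.range_add_one, Finset.filter_insert]
  by_cases h : x k = x (k + 1)
  · simp [h]
  · rw [if_pos h, if_neg h, Finset.card_insert_of_notMem (by simp)]
    ring

end Runs

section Blocks

variable {A L x : ℕ → ℕ}

lemma strictMono_of_add_lt (hgap : ∀ s, A s + L s < A (s + 1)) : StrictMono A :=
  strictMono_nat_of_lt_succ fun s => by have := hgap s; omega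

lemma strictMono_add_of_add_lt (hgap : ∀ s, A s + L s < A (s + 1)) :
    StrictMono fun s => A s + L s :=
  strictMono_nat_of_lt_succ fun s => by have := hgap s; omega

lemma eq_zero_of_mem_zeroBlock
    (hx : ∀ j, x j = if ∃ s, A s ≤ j + 1 ∧ j + 1 < A s + L s then 0 else 1) {s j : ℕ}
    (h₁ : A s ≤ j + 1) (h₂ : j + 1 < A s + L s) : x j = 0 := by
  rw [hx, if_pos ⟨s, h₁, h₂⟩]

lemma eq_one_of_mem_oneBlock
    (hx : ∀ j, x j = if ∃ s, A s ≤ j + 1 ∧ j + 1 < A s + L s then 0 else 1)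
    (hgap : ∀ s, A s + L s < A (s + 1)) {s j : ℕ}
    (h₁ : A s + L s ≤ j + 1) (h₂ : j + 1 < A (s + 1)) : x j = 1 := by
  rw [hx, if_neg]
  rintro ⟨t, ht₁, ht₂⟩
  rcases le_or_gt t s with hts | hts
  · have := (strictMono_add_of_add_lt hgap).monotone hts
    omega
  · have : A (s + 1) ≤ A t := (strictMono_of_add_lt hgap).monotone hts
    omega

theorem zeroCount_runCount_of_mem_block
    (hx : ∀ j, x j = if ∃ s, A s ≤ j + 1 ∧ j + 1 < A s + L s then 0 else 1)
    (hA0 : A 0 = 1) (hL : ∀ s, 0 < L s)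
    (hgap : ∀ s, A s + L s < A (s + 1)) {k : ℕ} (hk : 1 ≤ k) :
    (∀ s, k ∈ Finset.Ico (A s) (A s + L s) →
      zeroCount x k = ∑ t ∈ Finset.range s, L t + (k + 1 - A s) ∧ runCount x k = 2 * s + 1) ∧
    (∀ s, k ∈ Finset.Ico (A s + L s) (A (s + 1)) →
      zeroCount x k = ∑ t ∈ Finset.range (s + 1), L t ∧ runCount x k = 2 * s + 2) := by
  have hA : StrictMono A := strictMono_of_add_lt hgap
  simp only [Finset.mem_Ico]
  induction k, hk using Nat.le_induction with
  | base =>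
    have hx0 : x 0 = 0 := eq_zero_of_mem_zeroBlock hx (s := 0) (by omega) (by have := hL 0; omega)
    refine ⟨fun s hs => ?_, fun s hs => ?_⟩
    · obtain rfl : s = 0 := hA.le_iff_le.1 (hA0 ▸ hs.1) |> Nat.le_zero.1
      simp [zeroCount, Finset.filter_singleton, runCount_one, hx0, hA0]
    · have := hA.monotone (Nat.zero_le s)
      have := hL s
      omega
  | succ k hk ih =>
    obtain ⟨m, rfl⟩ : ∃ m, k = m + 1 := ⟨k - 1, by omega⟩
    obtain ⟨ihZ, ihO⟩ := ih
    refine ⟨fun s hs => ?_, fun s hs => ?_⟩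
    · have hx₁ : x (m + 1) = 0 := eq_zero_of_mem_zeroBlock hx hs.1 hs.2
      rcases hs.1.eq_or_lt with hAs | hAs
      · obtain ⟨t, rfl⟩ : ∃ t, s = t + 1 := ⟨s - 1, by
          have : s ≠ 0 := by rintro rfl; omega
          omega⟩
        have := hgap t
        obtain ⟨hN, hB⟩ := ihO t ⟨by omega, by omega⟩
        have hx₀ : x m = 1 := eq_one_of_mem_oneBlock hx hgap (s := t) (by omega) (by omega)
        rw [zeroCount_succ, runCount_succ_succ, hx₀, hx₁, hN, hB]
        simp only [↓reduceIte, Nat.one_ne_zero]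
        omega
      · obtain ⟨hN, hB⟩ := ihZ s ⟨by omega, by omega⟩
        have hx₀ : x m = 0 := eq_zero_of_mem_zeroBlock hx (s := s) (by omega) (by omega)
        rw [zeroCount_succ, runCount_succ_succ, hx₀, hx₁, hN, hB]
        simp only [↓reduceIte, and_true]
        omega
    · have hx₁ : x (m + 1) = 1 := eq_one_of_mem_oneBlock hx hgap hs.1 hs.2
      have := hL s
      rcases hs.1.eq_or_lt with hAs | hAs
      · obtain ⟨hN, hB⟩ := ihZ s ⟨by omega, by omega⟩
        have hx₀ : x m = 0 := eq_zero_of_mem_zeroBlock hx (s := s) (by omega) (by omega)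
        rw [zeroCount_succ, runCount_succ_succ, hx₀, hx₁, hN, hB, Finset.sum_range_succ]
        simp only [↓reduceIte, and_true, Nat.one_ne_zero, Nat.zero_ne_one]
        omega
      · obtain ⟨hN, hB⟩ := ihO s ⟨by omega, by omega⟩
        have hx₀ : x m = 1 := eq_one_of_mem_oneBlock hx hgap (s := s) (by omega) (by omega)
        rw [zeroCount_succ, runCount_succ_succ, hx₀, hx₁, hN, hB]
        simp only [↓reduceIte, and_true, Nat.one_ne_zero]
        omega

end Blocks

lemma add_add_three_le_two_rpow {q Ξ y : ℝ} (hpow : q + 1 + Ξ ≤ (2 : ℝ) ^ (q - 1))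
    (hqΞ : 1 ≤ q + Ξ) (hy : q ≤ y) : y + Ξ + 3 ≤ (2 : ℝ) ^ y := by
  have h2q : 2 * (q + 1 + Ξ) ≤ (2 : ℝ) ^ q := by
    rw [show q = q - 1 + 1 by ring, Real.rpow_add_one two_ne_zero]
    linarith
  have hyq := one_add_half_mul_le_two_rpow (sub_nonneg.2 hy)
  have hsplit : (2 : ℝ) ^ y = 2 ^ q * 2 ^ (y - q) := by
    rw [← Real.rpow_add two_pos]; ring_nf
  rw [hsplit]
  nlinarith

lemma two_rpow_Qf_succ (q : ℤ) (s : ℝ) :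
    (2 : ℝ) ^ Qf q (s + 1) = 2 ^ Qf q s * 2 ^ ((q : ℝ) * (2 * s + 1)) := by
  rw [← Real.rpow_add two_pos, Qf, Qf]; ring_nf

lemma Jlen_eq (q Ξ : ℤ) (s : ℝ) :
    Jlen q Ξ s = 2 ^ Qf q s * 2 ^ ((q : ℝ) * (2 * s + 1)) - 2 ^ Qf q s
      - ((q : ℝ) * (2 * s + 1) + Ξ) := by
  rw [Jlen, two_rpow_Qf_succ, Qf, Qf]; ring

section Jlen

variable {q Ξ : ℤ} {s : ℝ}

lemma Jlen_pos (hq : 0 ≤ q) (hqΞ : 1 ≤ q + Ξ)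
    (hpow : (q : ℝ) + 1 + Ξ ≤ (2 : ℝ) ^ ((q : ℝ) - 1)) (hs : 0 ≤ s) : 0 < Jlen q Ξ s := by
  have hqr : (0 : ℝ) ≤ q := by exact_mod_cast hq
  have hX : 1 ≤ (2 : ℝ) ^ Qf q s := Real.one_le_rpow one_le_two (by rw [Qf]; positivity)
  have hqΞr : (1 : ℝ) ≤ q + Ξ := by exact_mod_cast hqΞ
  have hy : (q : ℝ) ≤ q * (2 * s + 1) := by nlinarith
  have hY := add_add_three_le_two_rpow hpow hqΞr hy
  rw [Jlen_eq]
  nlinarith [mul_nonneg (sub_nonneg.2 hX)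
    (by linarith : (0 : ℝ) ≤ 2 ^ ((q : ℝ) * (2 * s + 1)) - 1)]

lemma Jlen_le (hq : 0 ≤ q) (hqΞ : 0 ≤ q + Ξ) (hs : 0 ≤ s) :
    Jlen q Ξ s ≤ 2 ^ Qf q (s + 1) := by
  have hqr : (0 : ℝ) ≤ q := by exact_mod_cast hq
  have hqΞr : (0 : ℝ) ≤ q + Ξ := by exact_mod_cast hqΞ
  have hL : 0 ≤ Qf q (s + 1) - Qf q s + Ξ := by rw [Qf, Qf]; nlinarith
  have hX : 0 < (2 : ℝ) ^ Qf q s := by positivity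
  rw [Jlen]
  linarith

end Jlen

def blockStart (q : ℤ) (s : ℕ) : ℕ := 2 ^ (q.toNat * s ^ 2)

def zeroLen (q Ξ : ℤ) (s : ℕ) : ℕ := (q * (2 * s + 1) + Ξ).toNat

section BlockStructure

variable {q Ξ : ℤ}

lemma cast_blockStart (hq : 0 ≤ q) (s : ℕ) : (blockStart q s : ℝ) = 2 ^ Qf q s := by
  have hcast : ((q.toNat : ℕ) : ℝ) = q := by exact_mod_cast Int.toNat_of_nonneg hq
  rw [blockStart, Nat.cast_pow, Nat.cast_ofNat, ← Real.rpow_natCast, Qf]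
  push_cast [hcast]
  rfl

lemma cast_zeroLen (hq : 0 ≤ q) (hqΞ : 0 ≤ q + Ξ) (s : ℕ) :
    (zeroLen q Ξ s : ℝ) = Qf q (s + 1) - Qf q s + Ξ := by
  have hnonneg : 0 ≤ q * (2 * s + 1) + Ξ := by nlinarith
  have : (zeroLen q Ξ s : ℤ) = q * (2 * s + 1) + Ξ := Int.toNat_of_nonneg hnonneg
  rw [← Int.cast_natCast, this, Qf, Qf]
  push_cast
  ring

lemma zeroLen_pos (hq : 0 ≤ q) (hqΞ : 1 ≤ q + Ξ) (s : ℕ) : 0 < zeroLen q Ξ s := by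
  have : 0 ≤ q * (2 * s) := by positivity
  rw [zeroLen, mul_add, mul_one]
  omega

lemma blockStart_add_zeroLen_lt (hq : 0 ≤ q) (hqΞ : 1 ≤ q + Ξ)
    (hpow : (q : ℝ) + 1 + Ξ ≤ (2 : ℝ) ^ ((q : ℝ) - 1)) (s : ℕ) :
    blockStart q s + zeroLen q Ξ s < blockStart q (s + 1) := by
  have hJ := Jlen_pos hq hqΞ hpow (s.cast_nonneg (α := ℝ))
  rw [Jlen, ← cast_zeroLen hq (by omega), ← cast_blockStart hq, ← Nat.cast_succ,
    ← cast_blockStart hq] at hJ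
  have : ((blockStart q s + zeroLen q Ξ s : ℕ) : ℝ) < blockStart q (s + 1) := by
    push_cast; linarith
  exact_mod_cast this

lemma xseq_eq_ite (hq : 0 ≤ q) (hqΞ : 0 ≤ q + Ξ) (j : ℕ) :
    xseq q Ξ j = if ∃ s, blockStart q s ≤ j + 1 ∧ j + 1 < blockStart q s + zeroLen q Ξ s
      then 0 else 1 := by
  have hI : ∀ s : ℕ, Iset q Ξ s =
      Set.Ico ((blockStart q s : ℕ) : ℝ) ((blockStart q s + zeroLen q Ξ s : ℕ) : ℝ) := by
    intro s
    rw [Iset, Nat.cast_add, cast_blockStart hq, cast_zeroLen hq hqΞ]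
    ring_nf
  simp only [xseq, hI, Set.mem_Ico]
  norm_cast

lemma cast_sum_zeroLen (hq : 0 ≤ q) (hqΞ : 0 ≤ q + Ξ) (s : ℕ) :
    ((∑ t ∈ Finset.range s, zeroLen q Ξ t : ℕ) : ℝ) = q * s ^ 2 + Ξ * s := by
  induction s with
  | zero => simp
  | succ s ih =>
    rw [Finset.sum_range_succ, Nat.cast_add, ih, cast_zeroLen hq hqΞ, Qf, Qf]
    push_cast
    ring

end BlockStructure

lemma oneBlock_count_exponent_le {q c τ σ u : ℝ} (hc : 1 ≤ c) (hcq : c ≤ q) (hσ : 2 ≤ σ)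
    (hrel : c = q * σ * (1 - τ)) (hu : 0 ≤ u) (huσ : u ≤ σ - 1) :
    q * u ^ 2 - τ * (q * u ^ 2 + c * u) ≤ -(u / 4) ∨
      q * u ^ 2 - τ * (q * u ^ 2 + c * u) ≤ -((σ - 1 - u) / 4) := by
  have hσ0 : 0 < σ := by linarith
  have hτσ : σ - 1 ≤ τ * σ := by nlinarith
  have key : σ * (q * u ^ 2 - τ * (q * u ^ 2 + c * u)) = c * u * (u - τ * σ) := by
    rw [hrel]; ring
  have hE : σ * (q * u ^ 2 - τ * (q * u ^ 2 + c * u)) ≤ -(u * (σ - 1 - u)) := by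
    rw [key]
    nlinarith [mul_nonneg (mul_nonneg (sub_nonneg.2 hc) hu) (by linarith : 0 ≤ τ * σ - u)]
  rcases le_total (2 * u) (σ - 1) with h | h
  · left
    refine le_of_mul_le_mul_left ?_ hσ0
    nlinarith [mul_nonneg hu (by linarith : 0 ≤ σ - 1 - u - σ / 4)]
  · right
    refine le_of_mul_le_mul_left ?_ hσ0
    nlinarith [mul_nonneg (by linarith : 0 ≤ σ - 1 - u) (by linarith : 0 ≤ u - σ / 4)]

lemma oneBlock_geom_exponent_le {q c τ σ u : ℝ} (hc : 1 ≤ c) (hcq : c ≤ q) (hτ : 1 / 2 ≤ τ)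
    (hσ : 2 ≤ σ) (hrel : c = q * σ * (1 - τ)) (hu : σ - 1 ≤ u) :
    q * (σ - 1) ^ 2 - τ * (q * u ^ 2 + c * u) ≤ -(u - (σ - 1)) := by
  have hσ0 : 0 < σ := by linarith
  have hτσ : σ - 1 ≤ τ * σ := by nlinarith
  have hat : σ * (q * (σ - 1) ^ 2 - τ * (q * (σ - 1) ^ 2 + c * (σ - 1))) ≤ σ * 0 := by
    have key : σ * (q * (σ - 1) ^ 2 - τ * (q * (σ - 1) ^ 2 + c * (σ - 1)))
        = c * (σ - 1) * (σ - 1 - τ * σ) := by rw [hrel]; ring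
    rw [key, mul_zero]
    exact mul_nonpos_of_nonneg_of_nonpos (by nlinarith) (by linarith)
  have hgrowth :
      u - (σ - 1) ≤ τ * (q * u ^ 2 + c * u) - τ * (q * (σ - 1) ^ 2 + c * (σ - 1)) := by
    have hfac : τ * (q * u ^ 2 + c * u) - τ * (q * (σ - 1) ^ 2 + c * (σ - 1))
        = (u - (σ - 1)) * (τ * (q * (u + (σ - 1)) + c)) := by ring
    rw [hfac]
    have hsum : 2 ≤ q * (u + (σ - 1)) := by nlinarith
    refine le_mul_of_one_le_right (by linarith) ?_
    nlinarith
  linarith [le_of_mul_le_mul_left hat hσ0]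

section Series

variable {q Ξ : ℤ}

lemma cast_Nf_Bf_of_mem_zeroBlock (hq : 0 ≤ q) (hqΞ : 1 ≤ q + Ξ)
    (hpow : (q : ℝ) + 1 + Ξ ≤ (2 : ℝ) ^ ((q : ℝ) - 1)) {s k : ℕ}
    (hk : k ∈ Finset.Ico (blockStart q s) (blockStart q s + zeroLen q Ξ s)) :
    (Nf q Ξ k : ℝ) = q * s ^ 2 + Ξ * s + (k - blockStart q s + 1) ∧
      (Bf q Ξ k : ℝ) = 2 * s + 1 := by
  have hk₁ : 1 ≤ k := Nat.one_le_two_pow.trans (Finset.mem_Ico.1 hk).1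
  -- `Nf q Ξ` and `Bf q Ξ` are `zeroCount` and `runCount` of `xseq q Ξ` by definition.
  obtain ⟨hN, hB⟩ : Nf q Ξ k = _ ∧ Bf q Ξ k = _ :=
    (zeroCount_runCount_of_mem_block (xseq_eq_ite hq (by omega)) (by simp [blockStart])
      (zeroLen_pos hq hqΞ) (blockStart_add_zeroLen_lt hq hqΞ hpow) hk₁).1 s hk
  rw [hN, hB, Nat.cast_add, cast_sum_zeroLen hq (by omega),
    Nat.cast_sub (by linarith [(Finset.mem_Ico.1 hk).1])]
  push_cast
  exact ⟨by ring, rfl⟩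

lemma cast_Nf_Bf_of_mem_oneBlock (hq : 0 ≤ q) (hqΞ : 1 ≤ q + Ξ)
    (hpow : (q : ℝ) + 1 + Ξ ≤ (2 : ℝ) ^ ((q : ℝ) - 1)) {s k : ℕ}
    (hk : k ∈ Finset.Ico (blockStart q s + zeroLen q Ξ s) (blockStart q (s + 1))) :
    (Nf q Ξ k : ℝ) = q * (s + 1) ^ 2 + Ξ * (s + 1) ∧ (Bf q Ξ k : ℝ) = 2 * s + 2 := by
  have hk₁ : 1 ≤ k :=
    Nat.one_le_two_pow.trans ((Nat.le_add_right _ _).trans (Finset.mem_Ico.1 hk).1)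
  obtain ⟨hN, hB⟩ : Nf q Ξ k = _ ∧ Bf q Ξ k = _ :=
    (zeroCount_runCount_of_mem_block (xseq_eq_ite hq (by omega)) (by simp [blockStart])
      (zeroLen_pos hq hqΞ) (blockStart_add_zeroLen_lt hq hqΞ hpow) hk₁).2 s hk
  rw [hN, hB, cast_sum_zeroLen hq (by omega)]
  push_cast
  exact ⟨rfl, rfl⟩

noncomputable def pi2Term (q Ξ : ℤ) (ξ τ lam : ℝ) (k : ℕ) : ℝ≥0∞ :=
  ENNReal.ofReal ((2 : ℝ) ^ (-lam * k - τ * (Nf q Ξ k : ℝ) + τ * ξ * (Bf q Ξ k : ℝ)))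

variable {ξ τ lam : ℝ}

lemma sum_zeroBlock_pi2Term_le (hq : 3 ≤ q) (hqΞ : 1 ≤ q + Ξ)
    (hpow : (q : ℝ) + 1 + Ξ ≤ (2 : ℝ) ^ ((q : ℝ) - 1)) (hc : 1 ≤ (Ξ : ℝ) - 2 * ξ)
    (hτ : 1 / 2 ≤ τ) (hlam : 0 ≤ lam) (s : ℕ) :
    ∑ k ∈ Finset.Ico (blockStart q s) (blockStart q s + zeroLen q Ξ s), pi2Term q Ξ ξ τ lam k ≤
      5 * ENNReal.ofReal ((2 : ℝ) ^ (τ * ξ)) * ENNReal.ofReal ((2 : ℝ) ^ (-2 * (s : ℝ))) := by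
  have hq' : (3 : ℝ) ≤ q := by exact_mod_cast hq
  have hs : (s : ℝ) ≤ s ^ 2 := by
    rcases Nat.eq_zero_or_pos s with h | h
    · simp [h]
    · nlinarith [(Nat.one_le_cast (α := ℝ)).2 h]
  have hterm : ∀ i ∈ Finset.range (zeroLen q Ξ s), pi2Term q Ξ ξ τ lam (blockStart q s + i) ≤
      ENNReal.ofReal ((2 : ℝ) ^ (τ * ξ)) * ENNReal.ofReal ((2 : ℝ) ^ (-2 * (s : ℝ))) *
        ENNReal.ofReal ((2 : ℝ) ^ (-(1 / 2) * (i : ℝ))) := by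
    intro i hi
    obtain ⟨hN, hB⟩ := cast_Nf_Bf_of_mem_zeroBlock (by omega) hqΞ hpow
      (Finset.mem_Ico.2 ⟨Nat.le_add_right _ i, by simpa using hi⟩)
    rw [← ofReal_two_rpow_add, ← ofReal_two_rpow_add, pi2Term]
    refine ofReal_two_rpow_le_ofReal_two_rpow ?_
    rw [hN, hB]
    push_cast
    have hk : 0 ≤ lam * (blockStart q s + i) := by positivity
    nlinarith [mul_le_mul_of_nonneg_right hτ (by positivity : (0 : ℝ) ≤ 3 * s ^ 2 + s + i + 1),
      mul_le_mul_of_nonneg_left hq' (by positivity : (0 : ℝ) ≤ τ * s ^ 2),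
      mul_le_mul_of_nonneg_left hc (by positivity : (0 : ℝ) ≤ τ * s)]
  rw [Finset.sum_Ico_eq_sum_range, add_tsub_cancel_left]
  calc _ ≤ _ := Finset.sum_le_sum hterm
    _ ≤ ENNReal.ofReal ((2 : ℝ) ^ (τ * ξ)) * ENNReal.ofReal ((2 : ℝ) ^ (-2 * (s : ℝ))) *
          ENNReal.ofReal (1 + 2 / (1 / 2)) := by
      rw [← Finset.mul_sum]
      gcongr
      exact (ENNReal.sum_le_tsum _).trans (tsum_ofReal_two_rpow_neg_mul_le (by norm_num))
    _ = _ := by norm_num; ring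

lemma sum_oneBlock_pi2Term_le (hq : 0 ≤ q) (hqΞ : 1 ≤ q + Ξ)
    (hpow : (q : ℝ) + 1 + Ξ ≤ (2 : ℝ) ^ ((q : ℝ) - 1)) {σ : ℝ} (hc : 1 ≤ (Ξ : ℝ) - 2 * ξ)
    (hcq : (Ξ : ℝ) - 2 * ξ ≤ q) (hτ : 1 / 2 ≤ τ) (hσ : 2 ≤ σ)
    (hrel : (Ξ : ℝ) - 2 * ξ = q * σ * (1 - τ)) (hlam : 0 < lam)
    (hlamP : 1 + 2 / lam ≤ 3 * (2 : ℝ) ^ ((q : ℝ) * (σ - 1) ^ 2)) (s : ℕ) :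
    ∑ k ∈ Finset.Ico (blockStart q s + zeroLen q Ξ s) (blockStart q (s + 1)),
        pi2Term q Ξ ξ τ lam k ≤
      3 * (ENNReal.ofReal ((2 : ℝ) ^ (-(1 / 4) * (s : ℝ))) +
        ENNReal.ofReal ((2 : ℝ) ^ (-(1 / 4) * |(s : ℝ) - (σ - 2)|))) := by
  set c : ℝ := (Ξ : ℝ) - 2 * ξ
  set u : ℝ := s + 1 with hu
  set E : ℝ := τ * (q * u ^ 2 + c * u)
  set O := Finset.Ico (blockStart q s + zeroLen q Ξ s) (blockStart q (s + 1))
  have hterm : ∀ k ∈ O, pi2Term q Ξ ξ τ lam k =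
      ENNReal.ofReal ((2 : ℝ) ^ (-lam * k)) * ENNReal.ofReal ((2 : ℝ) ^ (-E)) := by
    intro k hk
    obtain ⟨hN, hB⟩ := cast_Nf_Bf_of_mem_oneBlock hq hqΞ hpow hk
    rw [pi2Term, ← ofReal_two_rpow_add, hN, hB]
    congr 2
    ring
  set S := ∑ k ∈ O, ENNReal.ofReal ((2 : ℝ) ^ (-lam * k))
  have hcount : S ≤ ENNReal.ofReal ((2 : ℝ) ^ ((q : ℝ) * u ^ 2)) := by
    calc S ≤ ∑ k ∈ O, (1 : ℝ≥0∞) := Finset.sum_le_sum fun k _ =>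
          ENNReal.ofReal_le_one.2 (Real.rpow_le_one_of_one_le_of_nonpos one_le_two
            (by nlinarith [k.cast_nonneg (α := ℝ)]))
      _ ≤ blockStart q (s + 1) := by simp [O]
      _ = _ := by
        rw [← ENNReal.ofReal_natCast, cast_blockStart hq, Qf, hu]
        push_cast
        rfl
  have hgeom : S ≤ 3 * ENNReal.ofReal ((2 : ℝ) ^ ((q : ℝ) * (σ - 1) ^ 2)) := by
    calc S ≤ ENNReal.ofReal (1 + 2 / lam) :=
          (ENNReal.sum_le_tsum _).trans (tsum_ofReal_two_rpow_neg_mul_le hlam)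
      _ ≤ _ := by
        rw [← ENNReal.ofReal_ofNat 3, ← ENNReal.ofReal_mul (by norm_num)]
        exact ENNReal.ofReal_le_ofReal hlamP
  rw [Finset.sum_congr rfl hterm, ← Finset.sum_mul]
  obtain ⟨e, he, hbound⟩ : ∃ e : ℝ, (e ≤ -(1 / 4) * s ∨ e ≤ -(1 / 4) * |(s : ℝ) - (σ - 2)|) ∧
      S * ENNReal.ofReal ((2 : ℝ) ^ (-E)) ≤ 3 * ENNReal.ofReal ((2 : ℝ) ^ e) := by
    rcases le_total u (σ - 1) with huσ | huσ
    · refine ⟨q * u ^ 2 - E, ?_, ?_⟩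
      · rcases oneBlock_count_exponent_le hc hcq hσ hrel (by positivity) huσ with hE | hE
        · exact Or.inl (by linarith)
        · exact Or.inr (by rw [abs_of_nonpos (by linarith)]; linarith)
      · calc S * ENNReal.ofReal ((2 : ℝ) ^ (-E))
            ≤ ENNReal.ofReal ((2 : ℝ) ^ ((q : ℝ) * u ^ 2)) * ENNReal.ofReal ((2 : ℝ) ^ (-E)) :=
              mul_le_mul_left hcount _
          _ = ENNReal.ofReal ((2 : ℝ) ^ ((q : ℝ) * u ^ 2 - E)) := by
            rw [← ofReal_two_rpow_add, ← sub_eq_add_neg]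
          _ ≤ _ := le_mul_of_one_le_left' (by norm_num)
    · refine ⟨q * (σ - 1) ^ 2 - E, Or.inr ?_, ?_⟩
      · have hE := oneBlock_geom_exponent_le hc hcq hτ hσ hrel huσ
        rw [abs_of_nonneg (by linarith)]
        linarith
      · calc S * ENNReal.ofReal ((2 : ℝ) ^ (-E))
            ≤ 3 * ENNReal.ofReal ((2 : ℝ) ^ ((q : ℝ) * (σ - 1) ^ 2)) *
              ENNReal.ofReal ((2 : ℝ) ^ (-E)) := mul_le_mul_left hgeom _
          _ = _ := by rw [mul_assoc, ← ofReal_two_rpow_add, ← sub_eq_add_neg]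
  exact hbound.trans (mul_le_mul_right (ofReal_two_rpow_le_add_of_le_or_le he) 3)

lemma lamf_pos (hq : 0 ≤ q) (hqΞ : 1 ≤ q + Ξ)
    (hpow : (q : ℝ) + 1 + Ξ ≤ (2 : ℝ) ^ ((q : ℝ) - 1)) {s : ℝ} (hs : 0 ≤ s) :
    0 < lamf q Ξ s :=
  one_div_pos.2 (Jlen_pos hq hqΞ hpow hs)

lemma one_add_two_div_lamf_le (hq : 0 ≤ q) (hqΞ : 1 ≤ q + Ξ) {s : ℝ} (hs : 0 ≤ s) :
    1 + 2 / lamf q Ξ s ≤ 3 * 2 ^ Qf q (s + 1) := by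
  have hJ := Jlen_le hq (by omega : 0 ≤ q + Ξ) hs
  have hP : 1 ≤ (2 : ℝ) ^ Qf q (s + 1) :=
    Real.one_le_rpow one_le_two (mul_nonneg (by exact_mod_cast hq) (sq_nonneg _))
  rw [lamf, one_div, div_inv_eq_mul]
  linarith

lemma Pi2_eq_one_add_tsum_blocks (hq : 0 ≤ q) (hqΞ : 1 ≤ q + Ξ)
    (hpow : (q : ℝ) + 1 + Ξ ≤ (2 : ℝ) ^ ((q : ℝ) - 1)) (ξ τ lam : ℝ) :
    Pi2 q Ξ ξ τ lam = 1 + ∑' s, (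
      ∑ k ∈ Finset.Ico (blockStart q s) (blockStart q s + zeroLen q Ξ s), pi2Term q Ξ ξ τ lam k +
      ∑ k ∈ Finset.Ico (blockStart q s + zeroLen q Ξ s) (blockStart q (s + 1)),
        pi2Term q Ξ ξ τ lam k) := by
  have hgap := blockStart_add_zeroLen_lt hq hqΞ hpow
  have hA0 : blockStart q 0 = 1 := by simp [blockStart]
  change ∑' k, pi2Term q Ξ ξ τ lam k = _
  rw [tsum_eq_sum_range_add_tsum_sum_Ico (strictMono_of_add_lt hgap), hA0]
  congr 1
  · simp [pi2Term, Nf, Bf]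
  · refine tsum_congr fun s => (Finset.sum_Ico_consecutive _ (Nat.le_add_right _ _) ?_).symm
    exact (hgap s).le

end Series

lemma one_add_tsum_block_bounds_le (a t : ℝ) :
    1 + ∑' s : ℕ, (5 * ENNReal.ofReal ((2 : ℝ) ^ a) * ENNReal.ofReal ((2 : ℝ) ^ (-2 * (s : ℝ))) +
      3 * (ENNReal.ofReal ((2 : ℝ) ^ (-(1 / 4) * (s : ℝ))) +
        ENNReal.ofReal ((2 : ℝ) ^ (-(1 / 4) * |(s : ℝ) - t|)))) ≤
      ENNReal.ofReal (10 * (2 : ℝ) ^ a + 101) := by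
  rw [ENNReal.tsum_add, ENNReal.tsum_mul_left, ENNReal.tsum_mul_left, ENNReal.tsum_add]
  calc
    _ ≤ 1 + (5 * ENNReal.ofReal ((2 : ℝ) ^ a) * ENNReal.ofReal (1 + 2 / 2) +
        3 * (ENNReal.ofReal (1 + 2 / (1 / 4)) + 2 * ENNReal.ofReal (1 + 2 / (1 / 4)))) := by
      gcongr
      · exact tsum_ofReal_two_rpow_neg_mul_le two_pos
      · exact tsum_ofReal_two_rpow_neg_mul_le (by norm_num)
      · exact tsum_ofReal_two_rpow_neg_mul_abs_sub_le (by norm_num) t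
    _ = 10 * ENNReal.ofReal ((2 : ℝ) ^ a) + 82 := by
      norm_num
      ring
    _ ≤ _ := by
      rw [ENNReal.ofReal_add (by positivity) (by norm_num), ENNReal.ofReal_mul (by norm_num)]
      norm_num
      gcongr
      norm_num

theorem stmt7 (Ξ q : ℤ) (hq : 3 ≤ q) (hqΞ : 1 ≤ q + Ξ)
    (hpow : (q : ℝ) + 1 + (Ξ : ℝ) ≤ (2 : ℝ) ^ ((q : ℝ) - 1))
    (ξ : ℝ) (hξ1 : 1 ≤ (Ξ : ℝ) - 2 * ξ) (hξ2 : (Ξ : ℝ) - 2 * ξ ≤ 2) :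
    ∀ τ : ℝ, ((q : ℝ) - 2) / ((q : ℝ) - 1) < τ → τ < 1 →
      2 ≤ ((Ξ : ℝ) - 2 * ξ) / ((q : ℝ) * (1 - τ)) →
      Pi2 q Ξ ξ τ (lamf q Ξ (((Ξ : ℝ) - 2 * ξ) / ((q : ℝ) * (1 - τ)) - 2)) ≤
        ENNReal.ofReal (10 * (2 : ℝ) ^ (τ * ξ) + 101) := by
  intro τ hτ hτ1 hσ
  set σ := ((Ξ : ℝ) - 2 * ξ) / ((q : ℝ) * (1 - τ)) with hσ_def
  have hq₀ : 0 ≤ q := by omega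
  have hqr : (3 : ℝ) ≤ q := by exact_mod_cast hq
  have hτ_half : 1 / 2 ≤ τ := by
    have : 1 / 2 ≤ ((q : ℝ) - 2) / ((q : ℝ) - 1) := by
      rw [le_div_iff₀ (by linarith)]; linarith
    linarith
  have hrel : (Ξ : ℝ) - 2 * ξ = q * σ * (1 - τ) := by
    rw [hσ_def]; field_simp [(by linarith : (q : ℝ) ≠ 0), (by linarith : 1 - τ ≠ 0)]
  have hlam := lamf_pos hq₀ hqΞ hpow (by linarith : 0 ≤ σ - 2)
  have hlamP : 1 + 2 / lamf q Ξ (σ - 2) ≤ 3 * (2 : ℝ) ^ ((q : ℝ) * (σ - 1) ^ 2) := by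
    have := one_add_two_div_lamf_le hq₀ hqΞ (by linarith : 0 ≤ σ - 2)
    rwa [Qf, show σ - 2 + 1 = σ - 1 by ring] at this
  calc Pi2 q Ξ ξ τ (lamf q Ξ (σ - 2)) = _ := Pi2_eq_one_add_tsum_blocks hq₀ hqΞ hpow _ _ _
    _ ≤ 1 + ∑' s : ℕ, (5 * ENNReal.ofReal ((2 : ℝ) ^ (τ * ξ)) *
          ENNReal.ofReal ((2 : ℝ) ^ (-2 * (s : ℝ))) +
        3 * (ENNReal.ofReal ((2 : ℝ) ^ (-(1 / 4) * (s : ℝ))) +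
          ENNReal.ofReal ((2 : ℝ) ^ (-(1 / 4) * |(s : ℝ) - (σ - 2)|)))) := by
      refine add_le_add le_rfl (ENNReal.tsum_le_tsum fun s => add_le_add ?_ ?_)
      · exact sum_zeroBlock_pi2Term_le hq hqΞ hpow hξ1 hτ_half hlam.le s
      · exact sum_oneBlock_pi2Term_le hq₀ hqΞ hpow hξ1 (by linarith) hτ_half hσ hrel hlam hlamP s
    _ ≤ _ := one_add_tsum_block_bounds_le _ _
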